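/- arXiv:1812.08439 — 2 statements merged into one kernel-verified Lean document; each statement's English description precedes it below -/
import Mathlib

section
/- Let C ⊆ 𝔽₂ⁿ be a binary linear code. Then the set of roots of Γ_C, namely {x ∈ Γ_C : x•x = 2}, is finite with exactly 2n + 16·|{c ∈ C : wt(c) = 4}| elements, where |{c ∈ C : wt(c) = 4}| is the number of codewords of C of Hamming weight 4. -/
open scoped BigOperators

/-- The lattice `Γ_C = (1/√2)·ρ⁻¹(C) ⊆ ℝⁿ` associated to a binary code `C ⊆ 𝔽₂ⁿ`,
where `ρ : ℤⁿ → 𝔽₂ⁿ` is componentwise reduction modulo `2`. -/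
def codeLattice {n : ℕ} (C : Set (Fin n → ZMod 2)) : Set (Fin n → ℝ) :=
  {x | ∃ z : Fin n → ℤ, (fun i => (z i : ZMod 2)) ∈ C ∧
      ∀ i, x i = (z i : ℝ) / Real.sqrt 2}

/-- The Hamming weight of a word in `𝔽₂ⁿ`. -/
def hammingWt {n : ℕ} (c : Fin n → ZMod 2) : ℕ :=
  (Finset.univ.filter fun i => c i ≠ 0).card

/-!
Scaling by `√2` identifies the roots of `Γ_C` with the integer vectors `z` with `ρ z ∈ C` and
`∑ zᵢ² = 4`. Such a `z` is either `±2eᵢ`, which reduces to `0 ∈ C` (`2n` vectors), or has four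
entries `±1` and all others `0`; then `ρ z` is a codeword of weight `4`, and each such codeword
has exactly `2⁴` lifts with entries in `{0, ±1}`.
-/

open Finset

variable {ι : Type*}

def modTwo (z : ι → ℤ) : ι → ZMod 2 := fun i => z i

lemma sum_mul_self_div_sqrt_two [Fintype ι] (z : ι → ℤ) :
    ∑ i, (z i : ℝ) / √2 * ((z i : ℝ) / √2) = ((∑ i, z i ^ 2 : ℤ) : ℝ) / 2 := by
  push_cast
  rw [sum_div]
  refine sum_congr rfl fun i _ => ?_
  rw [div_mul_div_comm, Real.mul_self_sqrt zero_le_two, sq]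

lemma injective_div_sqrt_two : Function.Injective fun (z : ι → ℤ) i => (z i : ℝ) / √2 :=
  fun z w h => funext fun i => by
    exact_mod_cast (div_left_inj' (by positivity)).mp (congrFun h i)

lemma roots_codeLattice_eq_image {n : ℕ} (C : Set (Fin n → ZMod 2)) :
    {x | x ∈ codeLattice C ∧ ∑ i, x i * x i = 2} =
      (fun z i => (z i : ℝ) / √2) '' {z | modTwo z ∈ C ∧ ∑ i, z i ^ 2 = 4} := by
  ext x
  constructor
  · rintro ⟨⟨z, hC, hx⟩, hsum⟩
    obtain rfl : x = _ := funext hx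
    rw [sum_mul_self_div_sqrt_two] at hsum
    exact ⟨z, ⟨hC, by exact_mod_cast (by linarith : ((∑ i, z i ^ 2 : ℤ) : ℝ) = 4)⟩, rfl⟩
  · rintro ⟨z, ⟨hC, h4⟩, rfl⟩
    exact ⟨⟨z, hC, fun i => rfl⟩, by rw [sum_mul_self_div_sqrt_two, h4]; norm_num⟩

section Lifts

variable [Fintype ι] [DecidableEq ι]

def signLifts (c : ι → ZMod 2) : Finset (ι → ℤ) :=
  Fintype.piFinset fun i => if c i = 0 then {0} else {1, -1}

lemma modTwo_of_mem_signLifts {c : ι → ZMod 2} {z : ι → ℤ} (hz : z ∈ signLifts c) :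
    modTwo z = c := by
  funext i
  have hzi := Fintype.mem_piFinset.mp hz i
  split_ifs at hzi with hci
  · simp_all [modTwo]
  · have hc1 : c i = 1 := (by decide : ∀ a : ZMod 2, a ≠ 0 → a = 1) _ hci
    simp only [mem_insert, mem_singleton] at hzi
    rcases hzi with h | h <;> simp [modTwo, h, hc1]

lemma mem_signLifts_modTwo {z : ι → ℤ} (hz : ∀ i, z i = 0 ∨ z i = 1 ∨ z i = -1) :
    z ∈ signLifts (modTwo z) := by
  refine Fintype.mem_piFinset.mpr fun i => ?_
  rcases hz i with h | h | h <;> simp [modTwo, h]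

lemma card_signLifts (c : ι → ZMod 2) : #(signLifts c) = 2 ^ #{i | c i ≠ 0} := by
  rw [signLifts, Fintype.card_piFinset, prod_congr rfl fun i _ => apply_ite card (c i = 0) _ _]
  simp [prod_ite]

lemma sum_sq_of_mem_signLifts {c : ι → ZMod 2} {z : ι → ℤ} (hz : z ∈ signLifts c) :
    ∑ i, z i ^ 2 = #{i | c i ≠ 0} := by
  rw [card_filter, Nat.cast_sum]
  refine sum_congr rfl fun i _ => ?_
  have hzi := Fintype.mem_piFinset.mp hz i
  split_ifs at hzi ⊢ <;> simp_all

def doubledBasis : Finset (ι → ℤ) :=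
  (univ ×ˢ {2, -2}).image fun p => Pi.single p.1 p.2

lemma card_doubledBasis : #(doubledBasis : Finset (ι → ℤ)) = 2 * Fintype.card ι := by
  rw [doubledBasis, card_image_of_injOn, card_product, card_univ, mul_comm]
  · rfl
  rintro ⟨i, a⟩ hmem ⟨j, b⟩ - hab
  have ha0 : a ≠ 0 := by
    have ha : a = 2 ∨ a = -2 := by simpa using hmem
    omega
  have hij : i = j := by
    by_contra hij
    simpa [Pi.single_apply, hij, ha0] using congrFun hab i
  subst hij
  simpa using hab

lemma modTwo_of_mem_doubledBasis {z : ι → ℤ} (hz : z ∈ doubledBasis) : modTwo z = 0 := by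
  obtain ⟨⟨i, a⟩, hmem, rfl⟩ := mem_image.mp hz
  have ha : a = 2 ∨ a = -2 := by simpa using hmem
  funext j
  rcases eq_or_ne j i with rfl | hj
  · rcases ha with rfl | rfl <;> simp [modTwo] <;> decide
  · simp [modTwo, hj]

lemma sum_sq_of_mem_doubledBasis {z : ι → ℤ} (hz : z ∈ doubledBasis) : ∑ i, z i ^ 2 = 4 := by
  obtain ⟨⟨i, a⟩, hmem, rfl⟩ := mem_image.mp hz
  have ha : a = 2 ∨ a = -2 := by simpa using hmem
  rw [sum_eq_single i (fun j _ hj => by simp [hj]) (by simp)]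
  rcases ha with rfl | rfl <;> norm_num

lemma eq_pi_single_of_sum_sq_eq {z : ι → ℤ} {i : ι} (h : ∑ j, z j ^ 2 = z i ^ 2) :
    z = Pi.single i (z i) := by
  have hrest : ∑ j ∈ univ.erase i, z j ^ 2 = 0 := by
    have := add_sum_erase univ (fun j => z j ^ 2) (mem_univ i)
    linarith
  funext j
  rcases eq_or_ne j i with rfl | hj
  · simp
  · rw [Pi.single_eq_of_ne hj]
    exact pow_eq_zero_iff two_ne_zero |>.mp <|
      (sum_eq_zero_iff_of_nonneg fun k _ => sq_nonneg (z k)).mp hrest j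
        (mem_erase.mpr ⟨hj, mem_univ j⟩)

lemma mem_doubledBasis_or_of_sum_sq_eq_four {z : ι → ℤ} (h : ∑ i, z i ^ 2 = 4) :
    z ∈ doubledBasis ∨ ∀ i, z i = 0 ∨ z i = 1 ∨ z i = -1 := by
  have hle : ∀ i, z i ^ 2 ≤ 4 := fun i =>
    h ▸ single_le_sum (fun j _ => sq_nonneg (z j)) (mem_univ i)
  by_cases hfour : ∃ i, z i ^ 2 = 4
  · obtain ⟨i, hi⟩ := hfour
    have hzi : z i = 2 ∨ z i = -2 := sq_eq_sq_iff_eq_or_eq_neg.mp (hi.trans (by norm_num))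
    exact .inl <| mem_image.mpr
      ⟨(i, z i), by simpa using hzi, (eq_pi_single_of_sum_sq_eq (h.trans hi.symm)).symm⟩
  · simp only [not_exists] at hfour
    refine .inr fun i => ?_
    have hlt : z i ^ 2 < 4 := lt_of_le_of_ne (hle i) (hfour i)
    have : -2 < z i := by nlinarith
    have : z i < 2 := by nlinarith
    omega

lemma setOf_modTwo_mem_and_sum_sq_eq_four {C : Set (ι → ZMod 2)} [DecidablePred (· ∈ C)]
    (hC : 0 ∈ C) :
    {z : ι → ℤ | modTwo z ∈ C ∧ ∑ i, z i ^ 2 = 4} =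
      ↑(doubledBasis ∪ ({c | c ∈ C ∧ #{i | c i ≠ 0} = 4} : Finset _).biUnion signLifts) := by
  ext z
  simp only [Set.mem_ofPred_eq, coe_union, coe_biUnion, Set.mem_union, mem_coe, Set.mem_iUnion,
    mem_filter, mem_univ, true_and, exists_prop]
  constructor
  · rintro ⟨hC, h4⟩
    refine (mem_doubledBasis_or_of_sum_sq_eq_four h4).imp_right fun hz => ?_
    have hs := mem_signLifts_modTwo hz
    refine ⟨modTwo z, ⟨hC, ?_⟩, hs⟩
    exact_mod_cast (sum_sq_of_mem_signLifts hs).symm.trans h4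
  · rintro (hd | ⟨c, ⟨hC, hw⟩, hs⟩)
    · exact ⟨modTwo_of_mem_doubledBasis hd ▸ hC, sum_sq_of_mem_doubledBasis hd⟩
    · exact ⟨modTwo_of_mem_signLifts hs ▸ hC, by rw [sum_sq_of_mem_signLifts hs, hw]; rfl⟩

lemma card_doubledBasis_union_biUnion_signLifts (W : Finset (ι → ZMod 2))
    (hW : ∀ c ∈ W, #{i | c i ≠ 0} = 4) :
    #(doubledBasis ∪ W.biUnion signLifts) = 2 * Fintype.card ι + 16 * #W := by
  have hdisj : (W : Set (ι → ZMod 2)).PairwiseDisjoint signLifts := fun c _ c' _ hne =>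
    disjoint_left.mpr fun z hz hz' =>
      hne ((modTwo_of_mem_signLifts hz).symm.trans (modTwo_of_mem_signLifts hz'))
  have hdisj' : Disjoint doubledBasis (W.biUnion signLifts) := by
    refine disjoint_left.mpr fun z hd hb => ?_
    obtain ⟨c, hc, hs⟩ := mem_biUnion.mp hb
    have hc0 : c = 0 := (modTwo_of_mem_signLifts hs).symm.trans (modTwo_of_mem_doubledBasis hd)
    simpa [hc0] using hW c hc
  rw [card_union_of_disjoint hdisj', card_doubledBasis, card_biUnion hdisj,
    sum_congr rfl fun c hc => by rw [card_signLifts, hW c hc], sum_const, smul_eq_mul]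
  ring

end Lifts

/-- The set of roots of the lattice `Γ_C` is finite, of cardinality
`2n + 16·#{c ∈ C : wt(c) = 4}`. -/
theorem card_roots_codeLattice {n : ℕ}
    (C : Submodule (ZMod 2) (Fin n → ZMod 2)) :
    {x : Fin n → ℝ | x ∈ codeLattice (C : Set (Fin n → ZMod 2)) ∧
        ∑ i, x i * x i = 2}.Finite ∧
      {x : Fin n → ℝ | x ∈ codeLattice (C : Set (Fin n → ZMod 2)) ∧
        ∑ i, x i * x i = 2}.ncard =
        2 * n + 16 * {c : Fin n → ZMod 2 | c ∈ C ∧ hammingWt c = 4}.ncard := by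
  classical
  rw [roots_codeLattice_eq_image, setOf_modTwo_mem_and_sum_sq_eq_four C.zero_mem]
  refine ⟨(finite_toSet _).image _, ?_⟩
  rw [Set.ncard_image_of_injective _ injective_div_sqrt_two, Set.ncard_coe_finset,
    card_doubledBasis_union_biUnion_signLifts _ (fun c hc => (mem_filter.mp hc).2.2),
    Fintype.card_fin, Set.ncard_eq_toFinset_card', Set.toFinset_ofPred]
  rfl
end

section
/- Let C ⊆ 𝔽₂⁷ be the simplex code, the 𝔽₂-span of (1,0,1,0,1,0,1), (1,1,0,0,1,1,0), (1,1,1,1,0,0,0). Then the lattice Γ_C = (1/√2)·ρ⁻¹(C) ⊆ ℝ⁷ contains exactly 126 vectors x with x•x = 2 (this is the number of roots of the root system E₇). -/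
open scoped BigOperators

/-- The simplex `[7,3,4]` binary linear code. -/
def simplexCode : Submodule (ZMod 2) (Fin 7 → ZMod 2) :=
  Submodule.span (ZMod 2)
    {![1,0,1,0,1,0,1], ![1,1,0,0,1,1,0], ![1,1,1,1,0,0,0]}

set_option maxRecDepth 40000

set_option maxHeartbeats 2000000 in
/-- Explicit list of all `126` roots (times `√2`). -/
def Tlist : List (Fin 7 → ℤ) := [
  ![2,0,0,0,0,0,0],
  ![-2,0,0,0,0,0,0],
  ![0,2,0,0,0,0,0],
  ![0,-2,0,0,0,0,0],
  ![0,0,2,0,0,0,0],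
  ![0,0,-2,0,0,0,0],
  ![0,0,0,2,0,0,0],
  ![0,0,0,-2,0,0,0],
  ![0,0,0,0,2,0,0],
  ![0,0,0,0,-2,0,0],
  ![0,0,0,0,0,2,0],
  ![0,0,0,0,0,-2,0],
  ![0,0,0,0,0,0,2],
  ![0,0,0,0,0,0,-2],
  ![1,1,1,1,0,0,0],
  ![1,1,1,-1,0,0,0],
  ![1,1,-1,1,0,0,0],
  ![1,1,-1,-1,0,0,0],
  ![1,-1,1,1,0,0,0],
  ![1,-1,1,-1,0,0,0],
  ![1,-1,-1,1,0,0,0],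
  ![1,-1,-1,-1,0,0,0],
  ![-1,1,1,1,0,0,0],
  ![-1,1,1,-1,0,0,0],
  ![-1,1,-1,1,0,0,0],
  ![-1,1,-1,-1,0,0,0],
  ![-1,-1,1,1,0,0,0],
  ![-1,-1,1,-1,0,0,0],
  ![-1,-1,-1,1,0,0,0],
  ![-1,-1,-1,-1,0,0,0],
  ![1,1,0,0,1,1,0],
  ![1,1,0,0,1,-1,0],
  ![1,1,0,0,-1,1,0],
  ![1,1,0,0,-1,-1,0],
  ![1,-1,0,0,1,1,0],
  ![1,-1,0,0,1,-1,0],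
  ![1,-1,0,0,-1,1,0],
  ![1,-1,0,0,-1,-1,0],
  ![-1,1,0,0,1,1,0],
  ![-1,1,0,0,1,-1,0],
  ![-1,1,0,0,-1,1,0],
  ![-1,1,0,0,-1,-1,0],
  ![-1,-1,0,0,1,1,0],
  ![-1,-1,0,0,1,-1,0],
  ![-1,-1,0,0,-1,1,0],
  ![-1,-1,0,0,-1,-1,0],
  ![0,0,1,1,1,1,0],
  ![0,0,1,1,1,-1,0],
  ![0,0,1,1,-1,1,0],
  ![0,0,1,1,-1,-1,0],
  ![0,0,1,-1,1,1,0],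
  ![0,0,1,-1,1,-1,0],
  ![0,0,1,-1,-1,1,0],
  ![0,0,1,-1,-1,-1,0],
  ![0,0,-1,1,1,1,0],
  ![0,0,-1,1,1,-1,0],
  ![0,0,-1,1,-1,1,0],
  ![0,0,-1,1,-1,-1,0],
  ![0,0,-1,-1,1,1,0],
  ![0,0,-1,-1,1,-1,0],
  ![0,0,-1,-1,-1,1,0],
  ![0,0,-1,-1,-1,-1,0],
  ![1,0,1,0,1,0,1],
  ![1,0,1,0,1,0,-1],
  ![1,0,1,0,-1,0,1],
  ![1,0,1,0,-1,0,-1],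
  ![1,0,-1,0,1,0,1],
  ![1,0,-1,0,1,0,-1],
  ![1,0,-1,0,-1,0,1],
  ![1,0,-1,0,-1,0,-1],
  ![-1,0,1,0,1,0,1],
  ![-1,0,1,0,1,0,-1],
  ![-1,0,1,0,-1,0,1],
  ![-1,0,1,0,-1,0,-1],
  ![-1,0,-1,0,1,0,1],
  ![-1,0,-1,0,1,0,-1],
  ![-1,0,-1,0,-1,0,1],
  ![-1,0,-1,0,-1,0,-1],
  ![0,1,0,1,1,0,1],
  ![0,1,0,1,1,0,-1],
  ![0,1,0,1,-1,0,1],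
  ![0,1,0,1,-1,0,-1],
  ![0,1,0,-1,1,0,1],
  ![0,1,0,-1,1,0,-1],
  ![0,1,0,-1,-1,0,1],
  ![0,1,0,-1,-1,0,-1],
  ![0,-1,0,1,1,0,1],
  ![0,-1,0,1,1,0,-1],
  ![0,-1,0,1,-1,0,1],
  ![0,-1,0,1,-1,0,-1],
  ![0,-1,0,-1,1,0,1],
  ![0,-1,0,-1,1,0,-1],
  ![0,-1,0,-1,-1,0,1],
  ![0,-1,0,-1,-1,0,-1],
  ![0,1,1,0,0,1,1],
  ![0,1,1,0,0,1,-1],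
  ![0,1,1,0,0,-1,1],
  ![0,1,1,0,0,-1,-1],
  ![0,1,-1,0,0,1,1],
  ![0,1,-1,0,0,1,-1],
  ![0,1,-1,0,0,-1,1],
  ![0,1,-1,0,0,-1,-1],
  ![0,-1,1,0,0,1,1],
  ![0,-1,1,0,0,1,-1],
  ![0,-1,1,0,0,-1,1],
  ![0,-1,1,0,0,-1,-1],
  ![0,-1,-1,0,0,1,1],
  ![0,-1,-1,0,0,1,-1],
  ![0,-1,-1,0,0,-1,1],
  ![0,-1,-1,0,0,-1,-1],
  ![1,0,0,1,0,1,1],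
  ![1,0,0,1,0,1,-1],
  ![1,0,0,1,0,-1,1],
  ![1,0,0,1,0,-1,-1],
  ![1,0,0,-1,0,1,1],
  ![1,0,0,-1,0,1,-1],
  ![1,0,0,-1,0,-1,1],
  ![1,0,0,-1,0,-1,-1],
  ![-1,0,0,1,0,1,1],
  ![-1,0,0,1,0,1,-1],
  ![-1,0,0,1,0,-1,1],
  ![-1,0,0,1,0,-1,-1],
  ![-1,0,0,-1,0,1,1],
  ![-1,0,0,-1,0,1,-1],
  ![-1,0,0,-1,0,-1,1],
  ![-1,0,0,-1,0,-1,-1]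
]

/-- The roots as a finset. -/
def Troots : Finset (Fin 7 → ℤ) := Tlist.toFinset

set_option maxHeartbeats 2000000 in
lemma Troots_card : Troots.card = 126 := by decide

lemma mem_simplexCode_iff (v : Fin 7 → ZMod 2) :
    v ∈ simplexCode ↔ ∃ a b c : ZMod 2,
      v = a • ![1,0,1,0,1,0,1] + (b • ![1,1,0,0,1,1,0] + c • ![1,1,1,1,0,0,0]) := by
  constructor
  · intro h
    rw [simplexCode, Submodule.mem_span_insert] at h
    obtain ⟨a, u, hu, rfl⟩ := h
    rw [Submodule.mem_span_insert] at hu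
    obtain ⟨b, v, hv, rfl⟩ := hu
    rw [Submodule.mem_span_singleton] at hv
    obtain ⟨c, rfl⟩ := hv
    exact ⟨a, b, c, rfl⟩
  · rintro ⟨a, b, c, rfl⟩
    refine Submodule.add_mem _ (Submodule.smul_mem _ _ (Submodule.subset_span ?_))
      (Submodule.add_mem _ (Submodule.smul_mem _ _ (Submodule.subset_span ?_))
        (Submodule.smul_mem _ _ (Submodule.subset_span ?_))) <;> simp

lemma weight4_case (z : Fin 7 → ℤ) (w : Fin 7 → ZMod 2)
    (hodd : ∀ i, ((z i : ZMod 2)) = w i)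
    (hs : ∑ i, z i * z i = 4)
    (hw4 : ∑ i, (if w i = 1 then (1 : ℤ) else 0) = 4) :
    z ∈ Fintype.piFinset (fun i => if w i = 1 then ({-1, 1} : Finset ℤ) else {0}) := by
  have hle : ∀ i ∈ Finset.univ, (if w i = 1 then (1 : ℤ) else 0) ≤ z i * z i := by
    intro i _
    split
    · rename_i h1
      have hz : z i ≠ 0 := by
        intro h
        have h2 := hodd i
        rw [h] at h2
        exact absurd (h2.trans h1) (by norm_num)
      have hpos : 0 < z i * z i := mul_self_pos.mpr hz
      linarith
    · exact mul_self_nonneg _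
  have heq : ∀ i ∈ Finset.univ, (if w i = 1 then (1 : ℤ) else 0) = z i * z i :=
    (Finset.sum_eq_sum_iff_of_le hle).mp (hw4.trans hs.symm)
  rw [Fintype.mem_piFinset]
  intro i
  have h := (heq i (Finset.mem_univ i)).symm
  by_cases hw : w i = 1
  · rw [if_pos hw] at h ⊢
    rcases Int.mul_eq_one_iff_eq_one_or_neg_one.mp h with ⟨h1, _⟩ | ⟨h1, _⟩ <;>
      simp [h1]
  · rw [if_neg hw] at h ⊢
    simp [mul_self_eq_zero.mp h]

lemma zero_case (z : Fin 7 → ℤ)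
    (h0 : (fun i => ((z i : ZMod 2))) = ![0,0,0,0,0,0,0])
    (hs : ∑ i, z i * z i = 4) : z ∈ Troots := by
  have h0' : ∀ i, ((z i : ZMod 2)) = 0 := by
    intro i
    rw [congrFun h0 i]
    fin_cases i <;> rfl
  have hdvd : ∀ i, (2 : ℤ) ∣ z i := by
    intro i
    have := (ZMod.intCast_zmod_eq_zero_iff_dvd (z i) 2).mp (h0' i)
    exact_mod_cast this
  choose y hy using hdvd
  have hy1 : ∑ i, y i * y i = 1 := by
    have h4 : ∑ i, z i * z i = (4 : ℤ) * ∑ i, y i * y i := by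
      rw [Finset.mul_sum]
      exact Finset.sum_congr rfl (fun i _ => by rw [hy i]; ring)
    rw [hs] at h4
    linarith
  have hne : ∃ i, y i ≠ 0 := by
    by_contra h
    push_neg at h
    rw [Finset.sum_eq_zero (fun i _ => by rw [h i]; ring)] at hy1
    exact absurd hy1 (by norm_num)
  obtain ⟨i, hi⟩ := hne
  have hle : ∀ j ∈ Finset.univ, (if j = i then (1 : ℤ) else 0) ≤ y j * y j := by
    intro j _
    split
    · have hpos : 0 < y j * y j := mul_self_pos.mpr (by rename_i hji; rw [hji]; exact hi)
      linarith
    · exact mul_self_nonneg _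
  have hsum1 : ∑ j, (if j = i then (1 : ℤ) else 0) = 1 := by simp
  have heq : ∀ j ∈ Finset.univ, (if j = i then (1 : ℤ) else 0) = y j * y j :=
    (Finset.sum_eq_sum_iff_of_le hle).mp (hsum1.trans hy1.symm)
  have hmem : z ∈ Fintype.piFinset (fun j => if j = i then ({-2, 2} : Finset ℤ) else {0}) := by
    rw [Fintype.mem_piFinset]
    intro j
    have h := (heq j (Finset.mem_univ j)).symm
    by_cases hji : j = i
    · rw [if_pos hji] at h ⊢
      rcases Int.mul_eq_one_iff_eq_one_or_neg_one.mp h with ⟨h1, _⟩ | ⟨h1, _⟩ <;>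
        simp [hy j, h1]
    · rw [if_neg hji] at h ⊢
      simp [hy j, mul_self_eq_zero.mp h]
  have hsub : ∀ k : Fin 7,
      Fintype.piFinset (fun j => if j = k then ({-2, 2} : Finset ℤ) else {0}) ⊆ Troots := by
    decide
  exact hsub i hmem

def L8 : List (Fin 7 → ZMod 2) := [
  ![0,0,0,0,0,0,0],
  ![1,1,1,1,0,0,0],
  ![1,1,0,0,1,1,0],
  ![0,0,1,1,1,1,0],
  ![1,0,1,0,1,0,1],
  ![0,1,0,1,1,0,1],
  ![0,1,1,0,0,1,1],
  ![1,0,0,1,0,1,1]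
]

set_option maxHeartbeats 2000000 in
lemma key2 (z : Fin 7 → ℤ) (w : Fin 7 → ZMod 2) (hwL : w ∈ L8)
    (hv : (fun i => ((z i : ZMod 2))) = w)
    (hs : ∑ i, z i * z i = 4) : z ∈ Troots := by
  fin_cases hwL
  · exact zero_case z hv hs
  all_goals
    exact Finset.mem_of_subset (by decide)
      (weight4_case z _ (fun i => congrFun hv i) hs (by decide))

set_option maxHeartbeats 1000000 in
lemma key (z : Fin 7 → ℤ)
    (hc : (fun i => ((z i : ZMod 2))) ∈ simplexCode)
    (hs : ∑ i, z i * z i = 4) : z ∈ Troots := by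
  rw [mem_simplexCode_iff] at hc
  obtain ⟨a, b, c, hv⟩ := hc
  have hz2 : ∀ x : ZMod 2, x = 0 ∨ x = 1 := by decide
  rcases hz2 a with rfl | rfl <;> rcases hz2 b with rfl | rfl <;> rcases hz2 c with rfl | rfl <;>
    exact key2 z _ (by decide) hv hs

lemma Troots_prop : ∀ z ∈ Troots,
    ((∃ a b c : ZMod 2, (fun i => ((z i : ZMod 2))) =
        a • ![1,0,1,0,1,0,1] + (b • ![1,1,0,0,1,1,0] + c • ![1,1,1,1,0,0,0])) ∧
      ∑ i, z i * z i = 4) := by decide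

/-- The lattice associated to the simplex code has exactly `126` roots:
this is the number of roots of the root system `E₇`. -/
theorem card_roots_simplexCode_lattice :
    {x : Fin 7 → ℝ | x ∈ codeLattice (simplexCode : Set (Fin 7 → ZMod 2)) ∧
        ∑ i, x i * x i = 2}.Finite ∧
      {x : Fin 7 → ℝ | x ∈ codeLattice (simplexCode : Set (Fin 7 → ZMod 2)) ∧
        ∑ i, x i * x i = 2}.ncard = 126 := by
  have hs2 : Real.sqrt 2 * Real.sqrt 2 = 2 := Real.mul_self_sqrt (by norm_num)
  have hs0 : Real.sqrt 2 ≠ 0 := by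
    intro h
    rw [h, mul_zero] at hs2
    norm_num at hs2
  set φ : (Fin 7 → ℤ) → (Fin 7 → ℝ) := fun z i => (z i : ℝ) / Real.sqrt 2 with hφ
  have hinj : Function.Injective φ := by
    intro z z' h
    funext i
    have := congrFun h i
    simp only [hφ] at this
    field_simp at this
    exact_mod_cast this
  have hsumφ : ∀ z : Fin 7 → ℤ, ∑ i, φ z i * φ z i = (∑ i, (z i : ℝ) * z i) / 2 := by
    intro z
    rw [Finset.sum_div]
    refine Finset.sum_congr rfl (fun i _ => ?_)
    rw [div_mul_div_comm, hs2]
  have hSeq : {x : Fin 7 → ℝ | x ∈ codeLattice (simplexCode : Set (Fin 7 → ZMod 2)) ∧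
      ∑ i, x i * x i = 2} = φ '' ↑Troots := by
    ext x
    constructor
    · rintro ⟨⟨z, hzC, hx⟩, hsum⟩
      have hxφ : x = φ z := funext fun i => hx i
      have h4r : (∑ i, (z i : ℝ) * z i) = 4 := by
        have := hsum
        rw [hxφ, hsumφ] at this
        linarith
      have h4 : ∑ i, z i * z i = 4 := by exact_mod_cast h4r
      exact ⟨z, key z hzC h4, hxφ.symm⟩
    · rintro ⟨z, hzT, rfl⟩
      obtain ⟨⟨a, b, c, hv⟩, h4⟩ := Troots_prop z hzT
      refine ⟨⟨z, (mem_simplexCode_iff _).mpr ⟨a, b, c, hv⟩, fun i => rfl⟩, ?_⟩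
      rw [hsumφ]
      have h4r : (∑ i, (z i : ℝ) * z i) = 4 := by exact_mod_cast h4
      rw [h4r]
      norm_num
  constructor
  · rw [hSeq]
    exact Troots.finite_toSet.image φ
  · rw [hSeq, Set.ncard_image_of_injective _ hinj, Set.ncard_coe_finset, Troots_card]
end
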